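/- arXiv:2404.13730 — 4 statements merged into one kernel-verified Lean document; each statement's English description precedes it below -/
import Mathlib

section
/- Let 0 < γ < 1/2 and u₀ ∈ (0,1). Then for every k ≥ 1, the iterated integral ∫₀¹ du₁ ⋯ ∫₀¹ du_k ∏_{j=1}^k (u_{j-1} ∧ u_j)^{-γ} is at most ((2-γ)/(1-γ)) · (1/(1-2γ) + 1/(1-γ))^{k-1} · u₀^{-γ}. -/
/-!
Peel off the first variable: with `a` in the role of `u₀`, the `(k+1)`-fold integral equals
`∫₀¹ (a ∧ t)^{-γ} I_k(t) dt`, where `I_k(t)` is the `k`-fold integral started at `t`. If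
`I_k(t) ≤ C t^{-δ}`, splitting at `t = a` gives
`∫₀¹ (a ∧ t)^{-γ} t^{-δ} dt ≤ a^{1-γ-δ}/(1-γ-δ) + a^{-γ}/(1-δ)`, which is at most
`(1/(1-γ-δ) + 1/(1-δ)) a^{-γ}` since `a ≤ 1`. The first step (`I_0 = 1`, `δ = 0`) yields the
factor `(2-γ)/(1-γ)`, and each further step (`δ = γ`) the factor `1/(1-2γ) + 1/(1-γ)`.
-/

open MeasureTheory Set

theorem lintegral_pi_fin_succ {α : Type*} [MeasurableSpace α] (μ : Measure α) [SigmaFinite μ]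
    {k : ℕ} {f : (Fin (k + 1) → α) → ENNReal} (hf : Measurable f) :
    ∫⁻ u, f u ∂Measure.pi (fun _ => μ) =
      ∫⁻ t, ∫⁻ v, f (Fin.cons t v) ∂Measure.pi (fun _ => μ) ∂μ := by
  rw [← (measurePreserving_piFinSuccAbove (fun _ => μ) 0).symm.lintegral_comp hf,
    lintegral_prod (fun p => f ((MeasurableEquiv.piFinSuccAbove (fun _ => α) 0).symm p))
      (hf.comp (MeasurableEquiv.measurable _)).aemeasurable]
  simp [MeasurableEquiv.piFinSuccAbove_symm_apply, Fin.consEquiv]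

theorem lintegral_Ioc_rpow {r b : ℝ} (hr : -1 < r) (hb : 0 ≤ b) :
    ∫⁻ t in Ioc 0 b, ENNReal.ofReal (t ^ r) = ENNReal.ofReal (b ^ (r + 1) / (r + 1)) := by
  have hint : IntegrableOn (fun t : ℝ => t ^ r) (Ioc 0 b) :=
    (intervalIntegrable_iff_integrableOn_Ioc_of_le hb).1
      (intervalIntegral.intervalIntegrable_rpow' hr)
  rw [← ofReal_integral_eq_lintegral_ofReal hint
      ((ae_restrict_mem measurableSet_Ioc).mono fun t ht => Real.rpow_nonneg ht.1.le r),
    ← intervalIntegral.integral_of_le hb, integral_rpow (Or.inl hr),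
    Real.zero_rpow (by linarith), sub_zero]

theorem lintegral_Ioc_min_rpow_mul_rpow_le {γ δ a : ℝ} (hγδ : γ + δ < 1) (hδ : δ < 1)
    (ha : a ∈ Ioc (0 : ℝ) 1) :
    ∫⁻ t in Ioc 0 1, ENNReal.ofReal (min a t ^ (-γ) * t ^ (-δ))
      ≤ ENNReal.ofReal ((1 / (1 - (γ + δ)) + 1 / (1 - δ)) * a ^ (-γ)) := by
  obtain ⟨ha0, ha1⟩ := ha
  have below : ∫⁻ t in Ioc 0 a, ENNReal.ofReal (min a t ^ (-γ) * t ^ (-δ))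
      = ENNReal.ofReal (a ^ (1 - (γ + δ)) / (1 - (γ + δ))) := by
    rw [setLIntegral_congr_fun measurableSet_Ioc (g := fun t => ENNReal.ofReal (t ^ (-(γ + δ))))
      fun t ht => by rw [min_eq_right ht.2, ← Real.rpow_add ht.1, neg_add],
      lintegral_Ioc_rpow (by linarith) ha0.le, neg_add_eq_sub]
  have above : ∫⁻ t in Ioc a 1, ENNReal.ofReal (min a t ^ (-γ) * t ^ (-δ))
      ≤ ENNReal.ofReal (a ^ (-γ)) * ENNReal.ofReal (1 / (1 - δ)) := by
    calc ∫⁻ t in Ioc a 1, ENNReal.ofReal (min a t ^ (-γ) * t ^ (-δ))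
        = ∫⁻ t in Ioc a 1, ENNReal.ofReal (a ^ (-γ)) * ENNReal.ofReal (t ^ (-δ)) :=
          setLIntegral_congr_fun measurableSet_Ioc fun t ht => by
            rw [min_eq_left ht.1.le, ENNReal.ofReal_mul (Real.rpow_nonneg ha0.le _)]
      _ ≤ ENNReal.ofReal (a ^ (-γ)) * ∫⁻ t in Ioc 0 1, ENNReal.ofReal (t ^ (-δ)) := by
          rw [lintegral_const_mul _ (by fun_prop)]
          gcongr
      _ = ENNReal.ofReal (a ^ (-γ)) * ENNReal.ofReal (1 / (1 - δ)) := by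
          rw [lintegral_Ioc_rpow (by linarith) zero_le_one, Real.one_rpow, neg_add_eq_sub]
  have hpow : a ^ (1 - (γ + δ)) ≤ a ^ (-γ) :=
    Real.rpow_le_rpow_of_exponent_ge ha0 ha1 (by linarith)
  have hγδ' : 0 < 1 - (γ + δ) := by linarith
  have hδ' : 0 < 1 - δ := by linarith
  have ha' : 0 ≤ a ^ (1 - (γ + δ)) := Real.rpow_nonneg ha0.le _
  rw [← Ioc_union_Ioc_eq_Ioc ha0.le ha1, lintegral_union measurableSet_Ioc
    (Ioc_disjoint_Ioc_of_le le_rfl), below]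
  grw [above]
  rw [← ENNReal.ofReal_mul (Real.rpow_nonneg ha0.le _),
    ← ENNReal.ofReal_add (by positivity) (by positivity)]
  apply ENNReal.ofReal_le_ofReal
  calc a ^ (1 - (γ + δ)) / (1 - (γ + δ)) + a ^ (-γ) * (1 / (1 - δ))
      ≤ a ^ (-γ) / (1 - (γ + δ)) + a ^ (-γ) * (1 / (1 - δ)) := by gcongr
    _ = _ := by ring

-- The integrand of the theorem with `a` in place of `u₀`; the paper's `uⱼ` is `u (j - 1)`.
noncomputable def chainWeight (γ a : ℝ) (k : ℕ) (u : Fin k → ℝ) : ℝ :=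
  ∏ j : Fin k,
    (min (if j.val = 0 then a
          else u ⟨j.val - 1, lt_of_le_of_lt (Nat.sub_le _ _) j.isLt⟩) (u j)) ^ (-γ)

theorem measurable_chainWeight (γ a : ℝ) (k : ℕ) : Measurable (chainWeight γ a k) :=
  Finset.measurable_prod _ fun j _ => by split_ifs <;> fun_prop

theorem chainWeight_nonneg (γ : ℝ) {a : ℝ} (ha : 0 ≤ a) {k : ℕ} {u : Fin k → ℝ}
    (hu : ∀ j, 0 ≤ u j) : 0 ≤ chainWeight γ a k u :=
  Finset.prod_nonneg fun j _ =>
    Real.rpow_nonneg (le_min (by split_ifs <;> simp [ha, hu]) (hu j)) _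

theorem chainWeight_cons (γ a t : ℝ) {k : ℕ} (v : Fin k → ℝ) :
    chainWeight γ a (k + 1) (Fin.cons t v) = min a t ^ (-γ) * chainWeight γ t k v := by
  rw [chainWeight, Fin.prod_univ_succ]
  congr 1
  refine Finset.prod_congr rfl fun ⟨j, hj⟩ _ => ?_
  cases j <;> simp [Fin.cons]

theorem lintegral_chainWeight_succ_le {γ δ C : ℝ} {k : ℕ} (hγδ : γ + δ < 1) (hδ : δ < 1)
    (hC : 0 ≤ C)
    (hbound : ∀ t ∈ Ioc (0 : ℝ) 1, ∫⁻ v, ENNReal.ofReal (chainWeight γ t k v)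
      ∂Measure.pi (fun _ => volume.restrict (Ioc 0 1)) ≤ ENNReal.ofReal (C * t ^ (-δ)))
    {a : ℝ} (ha : a ∈ Ioc (0 : ℝ) 1) :
    ∫⁻ u, ENNReal.ofReal (chainWeight γ a (k + 1) u)
      ∂Measure.pi (fun _ => volume.restrict (Ioc 0 1))
      ≤ ENNReal.ofReal (C * (1 / (1 - (γ + δ)) + 1 / (1 - δ)) * a ^ (-γ)) := by
  rw [lintegral_pi_fin_succ _ (measurable_chainWeight γ a _).ennreal_ofReal]
  have hmin : ∀ t ∈ Ioc (0 : ℝ) 1, 0 ≤ min a t ^ (-γ) := fun t ht =>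
    Real.rpow_nonneg (le_min ha.1.le ht.1.le) _
  calc ∫⁻ t in Ioc 0 1, ∫⁻ v, ENNReal.ofReal (chainWeight γ a (k + 1) (Fin.cons t v))
        ∂Measure.pi (fun _ => volume.restrict (Ioc 0 1))
      ≤ ∫⁻ t in Ioc 0 1,
          ENNReal.ofReal (min a t ^ (-γ)) * ENNReal.ofReal (C * t ^ (-δ)) := by
        refine setLIntegral_mono (by fun_prop) fun t ht => ?_
        simp_rw [chainWeight_cons, ENNReal.ofReal_mul (hmin t ht)]
        rw [lintegral_const_mul _ (measurable_chainWeight γ t k).ennreal_ofReal]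
        gcongr
        exact hbound t ht
    _ = ENNReal.ofReal C * ∫⁻ t in Ioc 0 1, ENNReal.ofReal (min a t ^ (-γ) * t ^ (-δ)) := by
        rw [← lintegral_const_mul _ (by fun_prop)]
        refine setLIntegral_congr_fun measurableSet_Ioc fun t ht => ?_
        rw [← ENNReal.ofReal_mul (hmin t ht), ← ENNReal.ofReal_mul hC, mul_left_comm]
    _ ≤ ENNReal.ofReal C * ENNReal.ofReal ((1 / (1 - (γ + δ)) + 1 / (1 - δ)) * a ^ (-γ)) := by
        gcongr
        exact lintegral_Ioc_min_rpow_mul_rpow_le hγδ hδ ha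
    _ = _ := by rw [← ENNReal.ofReal_mul hC, mul_assoc]

theorem lintegral_chainWeight_le {γ : ℝ} (hγ : γ < 1 / 2) (k : ℕ) {a : ℝ}
    (ha : a ∈ Ioc (0 : ℝ) 1) :
    ∫⁻ u, ENNReal.ofReal (chainWeight γ a (k + 1) u)
      ∂Measure.pi (fun _ => volume.restrict (Ioc 0 1))
      ≤ ENNReal.ofReal
          ((2 - γ) / (1 - γ) * (1 / (1 - 2 * γ) + 1 / (1 - γ)) ^ k * a ^ (-γ)) := by
  have h1 : 0 < 1 - γ := by linarith
  have h2 : 0 < 1 - 2 * γ := by linarith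
  induction k generalizing a with
  | zero =>
    have := lintegral_chainWeight_succ_le (k := 0) (δ := 0) (C := 1) (by linarith) one_pos
      zero_le_one (fun t _ => by simp [chainWeight]) ha
    convert this using 3
    rw [pow_zero, add_zero, sub_zero]
    field_simp
    ring
  | succ k ih =>
    have := lintegral_chainWeight_succ_le (δ := γ) (by linarith) (by linarith)
      (mul_nonneg (div_nonneg (by linarith) h1.le) (pow_nonneg (by positivity) k))
      (fun t ht => ih ht) ha
    convert this using 2
    ring

theorem whole_path_mark_integral_bound_general (γ : ℝ) (hγ : γ < 1/2)
    (u₀ : ℝ) (hu₀ : u₀ ∈ Set.Ioo (0:ℝ) 1) (k : ℕ) (hk : 1 ≤ k) :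
    (∫ u : Fin k → ℝ in Set.univ.pi fun _ : Fin k => Set.Ioc (0:ℝ) 1,
      ∏ j : Fin k,
        (min (if j.val = 0 then u₀
              else u ⟨j.val - 1, lt_of_le_of_lt (Nat.sub_le _ _) j.isLt⟩) (u j)) ^ (-γ))
      ≤ ((2 - γ) / (1 - γ)) * (1/(1-2*γ) + 1/(1-γ)) ^ (k-1) * u₀ ^ (-γ) := by
  obtain ⟨k, rfl⟩ := Nat.exists_eq_add_of_le' hk
  change ∫ u in univ.pi fun _ => Ioc (0 : ℝ) 1, chainWeight γ u₀ (k + 1) u ≤ _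
  have hnonneg :
      0 ≤ᵐ[volume.restrict (univ.pi fun _ => Ioc (0 : ℝ) 1)] chainWeight γ u₀ (k + 1) :=
    (ae_restrict_mem (.univ_pi fun _ => measurableSet_Ioc)).mono fun u hu =>
      chainWeight_nonneg γ hu₀.1.le fun j => (hu j trivial).1.le
  have : 0 < 2 - γ := by linarith
  have : 0 < 1 - γ := by linarith
  have : 0 < 1 - 2 * γ := by linarith
  have := hu₀.1
  rw [integral_eq_lintegral_of_nonneg_ae hnonneg
      (measurable_chainWeight γ u₀ _).aestronglyMeasurable, volume_pi, Measure.restrict_pi_pi]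
  exact ENNReal.toReal_le_of_le_ofReal (by positivity)
    (lintegral_chainWeight_le hγ k (Ioo_subset_Ioc_self hu₀))

/-- For 0 < γ < 1/2 and u₀ ∈ (0,1), for every k ≥ 1 the iterated integral
∫₀¹ du₁ ⋯ ∫₀¹ du_k ∏_{j=1}^k (u_{j-1} ∧ u_j)^{-γ}
is at most ((2-γ)/(1-γ)) (1/(1-2γ)+1/(1-γ))^{k-1} u₀^{-γ}. -/
theorem whole_path_mark_integral_bound (γ : ℝ) (hγ0 : 0 < γ) (hγ : γ < 1/2)
    (u₀ : ℝ) (hu₀ : u₀ ∈ Set.Ioo (0:ℝ) 1) (k : ℕ) (hk : 1 ≤ k) :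
    (∫ u : Fin k → ℝ in Set.univ.pi fun _ : Fin k => Set.Ioc (0:ℝ) 1,
      ∏ j : Fin k,
        (min (if j.val = 0 then u₀
              else u ⟨j.val - 1, lt_of_le_of_lt (Nat.sub_le _ _) j.isLt⟩) (u j)) ^ (-γ))
      ≤ ((2 - γ) / (1 - γ)) * (1/(1-2*γ) + 1/(1-γ)) ^ (k-1) * u₀ ^ (-γ) :=
  whole_path_mark_integral_bound_general γ hγ u₀ hu₀ k hk
end

section
/- Let 0 < γ < 1/2 and u₀ ∈ (0,1). Then for every k ≥ 1, the iterated integral ∫₀¹ du₁ ⋯ ∫₀¹ du_k (∏_{j=1}^k (u_{j-1} ∧ u_j)^{-γ}) · u_k^{-γ} is at most (1/(1-2γ) + 1/(1-γ))^{k} · u₀^{-γ}. -/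
/-!
Unrolled from the front, the integrand is `W k u₀` (`minChainWeight`), where `W 0 a = a^(-γ)`
and `W (n+1) a u = (a ∧ u 0)^(-γ) · W n (u 0) (tail u)`. By Tonelli,
`∫ W (n+1) a = ∫₀¹ (a ∧ t)^(-γ) (∫ W n t) dt`, so by induction on `n` the bound
`∫ W n a ≤ C^n a^(-γ)` for `0 ≤ a ≤ 1` reduces to the one-variable integral
`∫₀¹ (a ∧ t)^(-γ) t^(-γ) dt = a^(1-2γ)/(1-2γ) + a^(-γ)(1 - a^(1-γ))/(1-γ)`, which is at most
`C a^(-γ)` with `C = 1/(1-2γ) + 1/(1-γ)` since `a ≤ 1`.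
-/

open MeasureTheory Set

noncomputable def minChainWeight (γ : ℝ) : (n : ℕ) → ℝ → (Fin n → ℝ) → ℝ
  | 0, a, _ => a ^ (-γ)
  | n + 1, a, u => min a (u 0) ^ (-γ) * minChainWeight γ n (u 0) (Fin.tail u)

lemma measurable_minChainWeight (γ : ℝ) (n : ℕ) :
    Measurable fun p : ℝ × (Fin n → ℝ) => minChainWeight γ n p.1 p.2 := by
  induction n with
  | zero => exact measurable_fst.pow_const _
  | succ n ih =>
    have h : Measurable fun p : ℝ × (Fin (n + 1) → ℝ) => (p.2 0, Fin.tail p.2) := by fun_prop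
    have hmin : Measurable fun p : ℝ × (Fin (n + 1) → ℝ) => min p.1 (p.2 0) ^ (-γ) := by
      fun_prop
    exact hmin.mul (ih.comp h)

lemma minChainWeight_nonneg (γ : ℝ) {n : ℕ} {a : ℝ} (ha : 0 ≤ a) {u : Fin n → ℝ}
    (hu : ∀ j, 0 ≤ u j) : 0 ≤ minChainWeight γ n a u := by
  induction n generalizing a with
  | zero => exact Real.rpow_nonneg ha _
  | succ n ih =>
    exact mul_nonneg (Real.rpow_nonneg (le_min ha (hu 0)) _) (ih (hu 0) fun j => hu j.succ)

lemma minChainWeight_eq_prod (γ a : ℝ) {n : ℕ} (hn : 1 ≤ n) (u : Fin n → ℝ) :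
    minChainWeight γ n a u =
      (∏ j : Fin n,
        (min (if j.val = 0 then a
              else u ⟨j.val - 1, lt_of_le_of_lt (Nat.sub_le _ _) j.isLt⟩) (u j)) ^ (-γ))
        * (u ⟨n - 1, Nat.sub_one_lt_of_le hn le_rfl⟩) ^ (-γ) := by
  induction n, hn using Nat.le_induction generalizing a with
  | base => simp [minChainWeight]
  | succ n hn ih =>
    rw [minChainWeight, ih, Fin.prod_univ_succ, mul_assoc]
    congr 2
    · refine Finset.prod_congr rfl fun j _ => ?_
      congr 2
      simp only [Fin.val_succ, Nat.add_one_ne_zero, if_false]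
      split_ifs with h <;> show u _ = u _ <;> congr 1 <;> ext <;> simp <;> omega
    · show u _ ^ _ = u _ ^ _
      congr 2; ext; simp; omega

section
variable {γ a : ℝ}

lemma one_div_add_one_div_nonneg (hγ : γ < 1 / 2) : 0 ≤ 1 / (1 - 2 * γ) + 1 / (1 - γ) := by
  have h2γ : 0 < 1 - 2 * γ := by linarith
  have h1γ : 0 < 1 - γ := by linarith
  positivity

lemma min_rpow_mul_rpow_of_le {t : ℝ} (ht0 : 0 ≤ t) (hta : t ≤ a) :
    min a t ^ (-γ) * t ^ (-γ) = t ^ (-(2 * γ)) := by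
  rw [min_eq_right hta, ← sq, ← Real.rpow_mul_natCast ht0]
  ring_nf

lemma min_rpow_mul_rpow_of_ge {t : ℝ} (hat : a ≤ t) :
    min a t ^ (-γ) * t ^ (-γ) = a ^ (-γ) * t ^ (-γ) := by
  rw [min_eq_left hat]

lemma intervalIntegrable_min_rpow_mul_rpow (hγ : γ < 1 / 2) (ha0 : 0 ≤ a) (ha1 : a ≤ 1) :
    IntervalIntegrable (fun t => min a t ^ (-γ) * t ^ (-γ)) volume 0 1 := by
  refine IntervalIntegrable.trans (b := a) ?_ ?_
  · refine (intervalIntegrable_congr ?_).mpr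
      (intervalIntegral.intervalIntegrable_rpow' (r := -(2 * γ)) (by linarith))
    rw [uIoc_of_le ha0]
    exact fun t ht => min_rpow_mul_rpow_of_le ht.1.le ht.2
  · refine (intervalIntegrable_congr ?_).mpr
      ((intervalIntegral.intervalIntegrable_rpow' (r := -γ) (by linarith)).const_mul (a ^ (-γ)))
    rw [uIoc_of_le ha1]
    exact fun t ht => min_rpow_mul_rpow_of_ge ht.1.le

lemma integral_min_rpow_mul_rpow (hγ : γ < 1 / 2) (ha0 : 0 ≤ a) (ha1 : a ≤ 1) :
    ∫ t in (0 : ℝ)..1, min a t ^ (-γ) * t ^ (-γ)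
      = a ^ (1 - 2 * γ) / (1 - 2 * γ) + a ^ (-γ) * ((1 - a ^ (1 - γ)) / (1 - γ)) := by
  have hint := intervalIntegrable_min_rpow_mul_rpow hγ ha0 ha1
  have hleft :
      ∫ t in (0 : ℝ)..a, min a t ^ (-γ) * t ^ (-γ) = a ^ (1 - 2 * γ) / (1 - 2 * γ) := by
    rw [intervalIntegral.integral_congr (g := fun t => t ^ (-(2 * γ))) fun t ht =>
        min_rpow_mul_rpow_of_le (uIcc_of_le ha0 ▸ ht).1 (uIcc_of_le ha0 ▸ ht).2,
      integral_rpow (Or.inl (by linarith)), Real.zero_rpow (by linarith)]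
    ring_nf
  have hright :
      ∫ t in a..1, min a t ^ (-γ) * t ^ (-γ) = a ^ (-γ) * ((1 - a ^ (1 - γ)) / (1 - γ)) := by
    rw [intervalIntegral.integral_congr (g := fun t => a ^ (-γ) * t ^ (-γ)) fun t ht =>
        min_rpow_mul_rpow_of_ge (uIcc_of_le ha1 ▸ ht).1,
      intervalIntegral.integral_const_mul, integral_rpow (Or.inl (by linarith)), Real.one_rpow]
    ring_nf
  have ha : a ∈ uIcc 0 1 := by rw [uIcc_of_le zero_le_one]; exact ⟨ha0, ha1⟩
  rw [← intervalIntegral.integral_add_adjacent_intervals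
      (hint.mono_set (uIcc_subset_uIcc left_mem_uIcc ha))
      (hint.mono_set (uIcc_subset_uIcc ha right_mem_uIcc)), hleft, hright]

lemma lintegral_min_rpow_mul_rpow_le (hγ : γ < 1 / 2) (ha0 : 0 ≤ a) (ha1 : a ≤ 1) :
    ∫⁻ t in Ioc 0 1, ENNReal.ofReal (min a t ^ (-γ) * t ^ (-γ))
      ≤ ENNReal.ofReal ((1 / (1 - 2 * γ) + 1 / (1 - γ)) * a ^ (-γ)) := by
  have hnonneg : 0 ≤ᵐ[volume.restrict (Ioc 0 1)] fun t => min a t ^ (-γ) * t ^ (-γ) := by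
    filter_upwards [ae_restrict_mem measurableSet_Ioc] with t ht
    exact mul_nonneg (Real.rpow_nonneg (le_min ha0 ht.1.le) _) (Real.rpow_nonneg ht.1.le _)
  rw [← ofReal_integral_eq_lintegral_ofReal
      ((intervalIntegrable_min_rpow_mul_rpow hγ ha0 ha1).1) hnonneg,
    ← intervalIntegral.integral_of_le zero_le_one, integral_min_rpow_mul_rpow hγ ha0 ha1]
  refine ENNReal.ofReal_le_ofReal ?_
  have h2γ : 0 < 1 - 2 * γ := by linarith
  have h1γ : 0 < 1 - γ := by linarith
  have hpow0 : 0 ≤ a ^ (1 - γ) := Real.rpow_nonneg ha0 _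
  have hpow1 : a ^ (1 - γ) ≤ 1 := Real.rpow_le_one ha0 ha1 h1γ.le
  have hsplit : a ^ (1 - 2 * γ) = a ^ (-γ) * a ^ (1 - γ) := by
    rw [← Real.rpow_add' ha0 (by linarith)]; ring_nf
  calc a ^ (1 - 2 * γ) / (1 - 2 * γ) + a ^ (-γ) * ((1 - a ^ (1 - γ)) / (1 - γ))
      = a ^ (-γ) * (a ^ (1 - γ) / (1 - 2 * γ) + (1 - a ^ (1 - γ)) / (1 - γ)) := by
        rw [hsplit]; ring
    _ ≤ a ^ (-γ) * (1 / (1 - 2 * γ) + 1 / (1 - γ)) := by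
        have := Real.rpow_nonneg ha0 (-γ)
        gcongr
        linarith
    _ = (1 / (1 - 2 * γ) + 1 / (1 - γ)) * a ^ (-γ) := mul_comm _ _

end

lemma lintegral_minChainWeight_le {γ : ℝ} (hγ : γ < 1 / 2) (n : ℕ) {a : ℝ} (ha0 : 0 ≤ a)
    (ha1 : a ≤ 1) :
    ∫⁻ u, ENNReal.ofReal (minChainWeight γ n a u)
        ∂(Measure.pi fun _ : Fin n => volume.restrict (Ioc (0 : ℝ) 1))
      ≤ ENNReal.ofReal ((1 / (1 - 2 * γ) + 1 / (1 - γ)) ^ n * a ^ (-γ)) := by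
  set C := 1 / (1 - 2 * γ) + 1 / (1 - γ)
  have hC : 0 ≤ C := one_div_add_one_div_nonneg hγ
  induction n generalizing a with
  | zero => simp [minChainWeight]
  | succ n ih =>
    set ν := volume.restrict (Ioc (0 : ℝ) 1)
    have hprod := measurePreserving_piFinSuccAbove (fun _ : Fin (n + 1) => ν) 0
    have hmeas : Measurable fun p : ℝ × (Fin n → ℝ) =>
        ENNReal.ofReal (min a p.1 ^ (-γ) * minChainWeight γ n p.1 p.2) := by
      have := measurable_minChainWeight γ n
      fun_prop
    calc ∫⁻ u, ENNReal.ofReal (minChainWeight γ (n + 1) a u) ∂(Measure.pi fun _ => ν)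
        = ∫⁻ t, ∫⁻ v, ENNReal.ofReal (min a t ^ (-γ) * minChainWeight γ n t v)
            ∂Measure.pi (fun _ => ν) ∂ν := by
          rw [← lintegral_prod _ hmeas.aemeasurable, ← hprod.lintegral_comp hmeas]
          -- `piFinSuccAbove _ 0` sends `u` to `(u 0, Fin.tail u)` definitionally
          rfl
      _ ≤ ∫⁻ t, ENNReal.ofReal (C ^ n) * ENNReal.ofReal (min a t ^ (-γ) * t ^ (-γ)) ∂ν := by
          refine lintegral_mono_ae ?_
          filter_upwards [ae_restrict_mem measurableSet_Ioc] with t ht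
          have hmin : 0 ≤ min a t ^ (-γ) := Real.rpow_nonneg (le_min ha0 ht.1.le) _
          simp_rw [ENNReal.ofReal_mul hmin]
          rw [lintegral_const_mul' _ _ ENNReal.ofReal_ne_top, mul_left_comm,
            ← ENNReal.ofReal_mul (pow_nonneg hC n)]
          exact mul_le_mul_right (ih ht.1.le ht.2) _
      _ ≤ ENNReal.ofReal (C ^ n) * ENNReal.ofReal (C * a ^ (-γ)) := by
          rw [lintegral_const_mul' _ _ ENNReal.ofReal_ne_top]
          exact mul_le_mul_right (lintegral_min_rpow_mul_rpow_le hγ ha0 ha1) _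
      _ = ENNReal.ofReal (C ^ (n + 1) * a ^ (-γ)) := by
          rw [← ENNReal.ofReal_mul (pow_nonneg hC n), pow_succ, mul_assoc]

/-- For 0 < γ < 1/2 and u₀ ∈ (0,1), for every k ≥ 1 the iterated integral
∫₀¹ du₁ ⋯ ∫₀¹ du_k (∏_{j=1}^k (u_{j-1} ∧ u_j)^{-γ}) u_k^{-γ}
is at most (1/(1-2γ)+1/(1-γ))^{k} u₀^{-γ}. -/
theorem whole_path_mark_integral_bound_with_endpoint (γ : ℝ) (hγ : γ < 1/2)
    (u₀ : ℝ) (hu₀ : u₀ ∈ Set.Ioo (0:ℝ) 1) (k : ℕ) (hk : 1 ≤ k) :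
    (∫ u : Fin k → ℝ in Set.univ.pi fun _ : Fin k => Set.Ioc (0:ℝ) 1,
      (∏ j : Fin k,
        (min (if j.val = 0 then u₀
              else u ⟨j.val - 1, lt_of_le_of_lt (Nat.sub_le _ _) j.isLt⟩) (u j)) ^ (-γ))
        * (u ⟨k - 1, by omega⟩) ^ (-γ))
      ≤ (1/(1-2*γ) + 1/(1-γ)) ^ k * u₀ ^ (-γ) := by
  simp_rw [← minChainWeight_eq_prod γ u₀ hk]
  have hnonneg : 0 ≤ᵐ[volume.restrict (univ.pi fun _ : Fin k => Ioc (0 : ℝ) 1)]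
      minChainWeight γ k u₀ := by
    filter_upwards [ae_restrict_mem (MeasurableSet.univ_pi fun _ => measurableSet_Ioc)]
      with u hu
    exact minChainWeight_nonneg γ hu₀.1.le fun j => (hu j (mem_univ j)).1.le
  have hmeas : Measurable (minChainWeight γ k u₀) :=
    (measurable_minChainWeight γ k).comp (measurable_const.prodMk measurable_id)
  rw [integral_eq_lintegral_of_nonneg_ae hnonneg hmeas.aestronglyMeasurable, volume_pi,
    Measure.restrict_pi_pi]
  exact ENNReal.toReal_le_of_le_ofReal
    (mul_nonneg (pow_nonneg (one_div_add_one_div_nonneg hγ) k) (Real.rpow_nonneg hu₀.1.le _))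
    (lintegral_minChainWeight_le hγ k hu₀.1.le hu₀.2.le)
end

section
/- Let δ > 1 and 0 < γ < 1/(δ+1). Then for every k ≥ 2 and every index h with 1 ≤ h ≤ k-1, the iterated integral over the region 1 > u₀ > u₁ > ⋯ > u_{h-1} > 0, 0 < u_h < u_{h-1}, and u_h < u_{h+1} < ⋯ < u_k < 1 of the integrand (∏_{i=0}^{h-2} u_i^{-γ-γ/δ}) · u_{h-1}^{-2γ} · u_h^{-γ-γδ} · (∏_{i=h+1}^{k} u_i^{-γ-γ/δ}) is at most (1/((1-2γ)(1-γ(δ+1)))) · (δ/(δ-γ(δ+1)))^k. -/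
/-!
Every coordinate of a point of the region lies in `(0, 1)`: the sequence decreases down to its
minimum `u_h > 0` and then increases, while both endpoints are below `1`. Since the integrand is
nonnegative, the integral is at most the integral over the whole cube `(0, 1)^(k+1)`, which
factorises into one-dimensional integrals `∫₀¹ x^p = (p + 1)⁻¹`. Two factors are `(1 - 2γ)⁻¹` and
`(1 - γ(δ+1))⁻¹`, and the other `k - 1` equal `(1 - γ - γ/δ)⁻¹ = δ / (δ - γ(δ+1)) ≥ 1`.
-/

open MeasureTheory Set

namespace Fin

variable {β : Type*} {n : ℕ} {c : Fin (n + 1)}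

section Preorder

variable [Preorder β] {f : Fin (n + 1) → β}

theorem antitoneOn_Iic_of_succ_le (hf : ∀ i : Fin n, i.castSucc < c → f i.succ ≤ f i.castSucc) :
    AntitoneOn f (Iic c) := by
  refine antitoneOn_of_succ_le ordConnected_Iic fun a ha _ hsucc => ?_
  obtain ⟨i, rfl⟩ := (exists_castSucc_eq (i := a)).2 (by rintro rfl; exact ha fun b _ => le_last b)
  rw [orderSucc_castSucc] at hsucc ⊢
  exact hf i (i.castSucc_lt_succ.trans_le hsucc)

theorem monotoneOn_Ici_of_le_succ (hf : ∀ i : Fin n, c ≤ i.castSucc → f i.castSucc ≤ f i.succ) :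
    MonotoneOn f (Ici c) := by
  refine monotoneOn_of_le_succ ordConnected_Ici fun a ha hmem _ => ?_
  obtain ⟨i, rfl⟩ := (exists_castSucc_eq (i := a)).2 (by rintro rfl; exact ha fun b _ => le_last b)
  rw [orderSucc_castSucc]
  exact hf i hmem

end Preorder

theorem mem_Icc_of_valley [LinearOrder β] {f : Fin (n + 1) → β}
    (hanti : ∀ i : Fin n, i.castSucc < c → f i.succ ≤ f i.castSucc)
    (hmono : ∀ i : Fin n, c ≤ i.castSucc → f i.castSucc ≤ f i.succ) (i : Fin (n + 1)) :
    f i ∈ Icc (f c) (max (f 0) (f (last n))) := by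
  rcases le_total i c with hic | hci
  · have h := antitoneOn_Iic_of_succ_le hanti
    exact ⟨h hic (le_refl c) hic, (h (zero_le c) hic (zero_le i)).trans (le_max_left _ _)⟩
  · have h := monotoneOn_Ici_of_le_succ hmono
    exact ⟨h (le_refl c) hci hci, (h hci (le_last c) (le_last i)).trans (le_max_right _ _)⟩

theorem prod_ite_val_eq_ite_val_eq {M : Type*} [CommMonoid M] {n a b : ℕ} (hab : a ≠ b)
    (ha : a ≤ n) (hb : b ≤ n) (x y z : M) :
    ∏ i : Fin (n + 1), (if i.val = a then x else if i.val = b then y else z)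
      = x * y * z ^ (n - 1) := by
  rw [prod_univ_eq_prod_range (fun m => if m = a then x else if m = b then y else z)]
  have ha' : a ∈ Finset.range (n + 1) := Finset.mem_range.2 (by omega)
  have hb' : b ∈ (Finset.range (n + 1)).erase a :=
    Finset.mem_erase.2 ⟨hab.symm, Finset.mem_range.2 (by omega)⟩
  rw [← Finset.mul_prod_erase _ _ ha', ← Finset.mul_prod_erase _ _ hb', if_pos rfl,
    if_neg hab.symm, if_pos rfl, ← mul_assoc]
  have hrest : ∀ m ∈ ((Finset.range (n + 1)).erase a).erase b,
      (if m = a then x else if m = b then y else z) = z := fun m hm => by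
    rw [Finset.mem_erase, Finset.mem_erase] at hm
    rw [if_neg hm.2.1, if_neg hm.1]
  rw [Finset.prod_congr rfl hrest, Finset.prod_const, Finset.card_erase_of_mem hb',
    Finset.card_erase_of_mem ha', Finset.card_range, Nat.add_sub_cancel]

end Fin

theorem integral_Ioo_zero_one_rpow {p : ℝ} (hp : -1 < p) :
    ∫ x in Ioo (0 : ℝ) 1, x ^ p = (p + 1)⁻¹ := by
  rw [← integral_Ioc_eq_integral_Ioo, ← intervalIntegral.integral_of_le zero_le_one,
    integral_rpow (Or.inl hp), Real.one_rpow, Real.zero_rpow (by linarith), sub_zero, one_div]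

section UnitCube

variable {ι : Type*} [Fintype ι] {p : ι → ℝ}

theorem integrableOn_prod_rpow_unitCube (hp : ∀ i, -1 < p i) :
    IntegrableOn (fun u : ι → ℝ => ∏ i, u i ^ p i) (univ.pi fun _ => Ioo 0 1) := by
  rw [IntegrableOn, volume_pi, Measure.restrict_pi_pi]
  exact Integrable.fintype_prod fun i =>
    (intervalIntegral.integrableOn_Ioo_rpow_iff one_pos).2 (hp i)

theorem integral_prod_rpow_unitCube (hp : ∀ i, -1 < p i) :
    ∫ u in univ.pi (fun _ => Ioo 0 1), ∏ i, u i ^ p i = ∏ i, (p i + 1)⁻¹ := by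
  rw [volume_pi, Measure.restrict_pi_pi,
    integral_fintype_prod_eq_prod (fun i (x : ℝ) => x ^ p i)]
  exact Finset.prod_congr rfl fun i _ => integral_Ioo_zero_one_rpow (hp i)

theorem setIntegral_prod_rpow_le_of_subset_unitCube (hp : ∀ i, -1 < p i) {s : Set (ι → ℝ)}
    (hs : s ⊆ univ.pi fun _ => Ioo 0 1) :
    ∫ u in s, ∏ i, u i ^ p i ≤ ∏ i, (p i + 1)⁻¹ := by
  rw [← integral_prod_rpow_unitCube hp]
  refine setIntegral_mono_set (integrableOn_prod_rpow_unitCube hp) ?_ hs.eventuallyLE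
  filter_upwards [ae_restrict_mem (MeasurableSet.univ_pi fun _ => measurableSet_Ioo)] with u hu
  exact Finset.prod_nonneg fun i _ => Real.rpow_nonneg (hu i (mem_univ i)).1.le _

end UnitCube

section Exponents

variable {δ γ : ℝ}

theorem mul_add_one_lt_one_of_lt_div (hδ : 1 < δ) (hγ : γ < 1 / (δ + 1)) : γ * (δ + 1) < 1 := by
  rwa [lt_div_iff₀ (by linarith)] at hγ

theorem two_mul_lt_one_of_lt_div (hδ : 1 < δ) (hγ : γ < 1 / (δ + 1)) : 2 * γ < 1 := by
  nlinarith [mul_add_one_lt_one_of_lt_div hδ hγ]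

theorem add_div_lt_one_of_lt_div (hδ : 1 < δ) (hγ : γ < 1 / (δ + 1)) : γ + γ / δ < 1 := by
  have h := mul_add_one_lt_one_of_lt_div hδ hγ
  rw [← lt_sub_iff_add_lt', div_lt_iff₀ (by linarith)]
  nlinarith

theorem inv_neg_add_div_add_one (hδ : δ ≠ 0) :
    (-(γ + γ / δ) + 1)⁻¹ = δ / (δ - γ * (δ + 1)) := by
  rw [← inv_div]
  field_simp
  ring

theorem one_le_div_sub_mul_add_one (hδ : 1 < δ) (hγ0 : 0 < γ) (hγ : γ < 1 / (δ + 1)) :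
    1 ≤ δ / (δ - γ * (δ + 1)) := by
  have h := mul_add_one_lt_one_of_lt_div hδ hγ
  rw [one_le_div (by linarith)]
  nlinarith

end Exponents

/-- for δ > 1 and 0 < γ < 1/(δ+1), k ≥ 2 and 1 ≤ h ≤ k-1, the integral
over the region 1 > u₀ > ⋯ > u_{h-1} > u_h > 0 and u_h < u_{h+1} < ⋯ < u_k < 1 of
(∏_{i=0}^{h-2} u_i^{-γ-γ/δ}) u_{h-1}^{-2γ} u_h^{-γ-γδ} (∏_{i=h+1}^k u_i^{-γ-γ/δ})
is at most (1/((1-2γ)(1-γ(δ+1)))) (δ/(δ-γ(δ+1)))^k. -/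
theorem skeleton_mark_integral_bound (δ γ : ℝ) (hδ : 1 < δ) (hγ0 : 0 < γ)
    (hγ : γ < 1 / (δ + 1)) (k h : ℕ) (hh1 : 1 ≤ h) (hhk : h ≤ k - 1) :
    (∫ u : Fin (k+1) → ℝ in
        {u : Fin (k+1) → ℝ |
          u ⟨0, by omega⟩ < 1 ∧ 0 < u ⟨h, by omega⟩ ∧ u (Fin.last k) < 1 ∧
          ∀ i : Fin k, (i.val < h → u i.succ < u i.castSucc)
            ∧ (h ≤ i.val → u i.castSucc < u i.succ)},
      ∏ i : Fin (k+1),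
        (u i) ^ (if i.val = h - 1 then -(2*γ)
                 else if i.val = h then -(γ + γ*δ) else -(γ + γ/δ)))
      ≤ (1 / ((1 - 2*γ) * (1 - γ*(δ+1)))) * (δ / (δ - γ*(δ+1))) ^ k := by
  have hγδ := mul_add_one_lt_one_of_lt_div hδ hγ
  have h2γ := two_mul_lt_one_of_lt_div hδ hγ
  set p : Fin (k + 1) → ℝ := fun i => if i.val = h - 1 then -(2*γ)
    else if i.val = h then -(γ + γ*δ) else -(γ + γ/δ)
  have hp : ∀ i, -1 < p i := fun i => by
    have := add_div_lt_one_of_lt_div hδ hγ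
    simp only [p]
    split_ifs <;> linarith
  have hprod : ∏ i, (p i + 1)⁻¹
      = (-(2*γ) + 1)⁻¹ * (-(γ + γ*δ) + 1)⁻¹ * (-(γ + γ/δ) + 1)⁻¹ ^ (k - 1) := by
    rw [← Fin.prod_ite_val_eq_ite_val_eq (a := h - 1) (b := h) (by omega) (by omega) (by omega)]
    exact Finset.prod_congr rfl fun i _ => by simp only [p]; split_ifs <;> rfl
  refine (setIntegral_prod_rpow_le_of_subset_unitCube hp ?_).trans ?_
  · rintro u ⟨h0, hpos, hlast, hstep⟩ i -
    have hi := Fin.mem_Icc_of_valley (c := ⟨h, by omega⟩)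
      (fun i hi => ((hstep i).1 hi).le) (fun i hi => ((hstep i).2 hi).le) i
    exact ⟨hpos.trans_le hi.1, hi.2.trans_lt (max_lt h0 hlast)⟩
  · calc ∏ i, (p i + 1)⁻¹
        = 1 / ((1 - 2*γ) * (1 - γ*(δ+1))) * (δ / (δ - γ*(δ+1))) ^ (k - 1) := by
          rw [hprod, inv_neg_add_div_add_one (by positivity), one_div, mul_inv]
          ring
      _ ≤ _ := by
        gcongr
        · exact one_le_div_sub_mul_add_one hδ hγ0 hγ
        · omega
end

section
/- Let δ > 1 and γ > 0 with γ(δ+1) > 1 and γ + γ/δ < 1, let s ∈ (0,1), and let k ≥ 1. Then the nested integral ∫_s^1 du₀ ∫_s^{u₀} du₁ ⋯ ∫_s^{u_{k-1}} du_k, of u₀^{-γ/δ} (∏_{j=1}^{k-1} u_j^{-γ-γ/δ}) u_k^{-γδ-γ}, is at most (1/(γ(δ+1)-1)) · (δ/(δ-γ(δ+1)))^{k-1} · (δ/(δ-γ)) · s^{1-γ(δ+1)}. -/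
/-!
The integrand is nonnegative and the ordered domain `s < u_k < ⋯ < u_0 < 1` lies in the box
`(s, 1)^{k+1}`, so the nested integral is at most the box integral, which factors by Fubini into
one-dimensional integrals `∫_s^1 x^r dx = (1 - s^{r+1}) / (r + 1)`. The exponents `-γ/δ` and
`-γ-γ/δ` exceed `-1`, giving the bounds `δ/(δ-γ)` and `δ/(δ-γ(δ+1))`; only the last exponent
`-γ(δ+1)` lies below `-1`, and it produces the factor `s^{1-γ(δ+1)}/(γ(δ+1)-1)`.
-/

open MeasureTheory Set

section BoxBound

variable {ι : Type*} [Fintype ι] {E : ι → Type*} {mE : ∀ i, MeasurableSpace (E i)}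
  {μ : (i : ι) → Measure (E i)} [∀ i, SigmaFinite (μ i)]

theorem setIntegral_univ_pi_prod_eq_prod (f : (i : ι) → E i → ℝ) (A : (i : ι) → Set (E i)) :
    ∫ x in univ.pi A, ∏ i, f i (x i) ∂Measure.pi μ = ∏ i, ∫ x in A i, f i x ∂μ i := by
  rw [Measure.restrict_pi_pi, integral_fintype_prod_eq_prod]

theorem setIntegral_prod_le_prod_setIntegral {f : (i : ι) → E i → ℝ} {A : (i : ι) → Set (E i)}
    {D : Set ((i : ι) → E i)} (hA : ∀ i, MeasurableSet (A i))
    (hf : ∀ i, IntegrableOn (f i) (A i) (μ i)) (hf0 : ∀ i, ∀ x ∈ A i, 0 ≤ f i x)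
    (hD : D ⊆ univ.pi A) :
    ∫ x in D, ∏ i, f i (x i) ∂Measure.pi μ ≤ ∏ i, ∫ x in A i, f i x ∂μ i := by
  rw [← setIntegral_univ_pi_prod_eq_prod]
  have hint : IntegrableOn (fun x ↦ ∏ i, f i (x i)) (univ.pi A) (Measure.pi μ) := by
    rw [IntegrableOn, Measure.restrict_pi_pi]
    exact Integrable.fintype_prod_dep hf
  refine setIntegral_mono_set hint ?_ hD.eventuallyLE
  filter_upwards [ae_restrict_mem (MeasurableSet.univ_pi hA)] with x hx
  exact Finset.prod_nonneg fun i _ ↦ hf0 i (x i) (hx i (mem_univ i))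

end BoxBound

section PowerIntegrals

variable {s r : ℝ}

theorem setIntegral_Ioo_rpow (hs : 0 < s) (hs1 : s ≤ 1) (hr : r ≠ -1) :
    ∫ x in Ioo s 1, x ^ r = (1 - s ^ (r + 1)) / (r + 1) := by
  rw [← integral_Ioc_eq_integral_Ioo, ← intervalIntegral.integral_of_le hs1,
    integral_rpow (Or.inr ⟨hr, notMem_uIcc_of_lt hs one_pos⟩), Real.one_rpow]

theorem setIntegral_Ioo_rpow_le_of_neg_one_lt (hs : 0 < s) (hs1 : s ≤ 1) (hr : -1 < r) :
    ∫ x in Ioo s 1, x ^ r ≤ 1 / (r + 1) := by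
  rw [setIntegral_Ioo_rpow hs hs1 hr.ne']
  gcongr
  · linarith
  · exact sub_le_self _ (Real.rpow_nonneg hs.le _)

theorem setIntegral_Ioo_rpow_le_of_lt_neg_one (hs : 0 < s) (hs1 : s ≤ 1) (hr : r < -1) :
    ∫ x in Ioo s 1, x ^ r ≤ s ^ (r + 1) / (-(r + 1)) := by
  rw [setIntegral_Ioo_rpow hs hs1 hr.ne, ← neg_div_neg_eq, neg_sub]
  gcongr
  · linarith
  · linarith

theorem integrableOn_Ioo_rpow_of_pos (hs : 0 < s) (r : ℝ) :
    IntegrableOn (fun x : ℝ ↦ x ^ r) (Ioo s 1) :=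
  (intervalIntegral.intervalIntegrable_rpow (Or.inr (notMem_uIcc_of_lt hs one_pos))).1.mono_set
    Ioo_subset_Ioc_self

end PowerIntegrals

theorem Fin.prod_univ_ite_zero_ite_last {M : Type*} [CommMonoid M] {k : ℕ} (hk : 1 ≤ k)
    (a b c : M) :
    ∏ i : Fin (k + 1), (if i.val = 0 then a else if i.val = k then b else c) =
      a * c ^ (k - 1) * b := by
  obtain ⟨m, rfl⟩ : ∃ m, k = m + 1 := ⟨k - 1, by omega⟩
  have hlt : ∀ i : Fin m, (i : ℕ) ≠ m := fun i ↦ i.is_lt.ne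
  rw [Fin.prod_univ_succ, Fin.prod_univ_castSucc]
  simp [hlt, mul_assoc]

theorem mem_univ_pi_Ioo_of_strictAnti {k : ℕ} {s : ℝ} {u : Fin (k + 1) → ℝ} (hs : ∀ i, s < u i)
    (h0 : u 0 < 1) (hu : ∀ i : Fin k, u i.succ < u i.castSucc) :
    u ∈ univ.pi fun _ ↦ Ioo s 1 := fun i _ ↦
  ⟨hs i, ((Fin.strictAnti_iff_succ_lt.mpr hu).antitone (Fin.zero_le i)).trans_lt h0⟩

theorem decreasing_skeleton_integral_bound_general (δ γ s : ℝ) (hδ : 1 < δ)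
    (h1 : 1 < γ * (δ + 1)) (h2 : γ + γ/δ < 1) (hs : 0 < s) (hs1 : s < 1)
    (k : ℕ) (hk : 1 ≤ k) :
    (∫ u : Fin (k+1) → ℝ in
        {u : Fin (k+1) → ℝ |
          (∀ i, s < u i) ∧ u 0 < 1 ∧ ∀ i : Fin k, u i.succ < u i.castSucc},
      ∏ i : Fin (k+1),
        (u i) ^ (if i.val = 0 then -(γ/δ)
                 else if i.val = k then -(γ*δ + γ) else -(γ + γ/δ)))
      ≤ (1 / (γ*(δ+1) - 1)) * (δ / (δ - γ*(δ+1))) ^ (k-1) * (δ / (δ - γ)) *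
          s ^ (1 - γ*(δ+1)) := by
  have hδ0 : 0 < δ := by linarith
  have hγ : 0 < γ := by nlinarith
  calc _ ≤ ∏ i : Fin (k + 1), ∫ x in Ioo s 1, x ^ (if i.val = 0 then -(γ/δ)
          else if i.val = k then -(γ*δ + γ) else -(γ + γ/δ)) :=
        setIntegral_prod_le_prod_setIntegral (fun _ ↦ measurableSet_Ioo)
          (fun _ ↦ integrableOn_Ioo_rpow_of_pos hs _)
          (fun _ x hx ↦ Real.rpow_nonneg (hs.trans hx.1).le _)
          (fun _ hu ↦ mem_univ_pi_Ioo_of_strictAnti hu.1 hu.2.1 hu.2.2)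
    _ ≤ ∏ i : Fin (k + 1), (if i.val = 0 then 1 / (-(γ/δ) + 1)
          else if i.val = k then s ^ (-(γ*δ + γ) + 1) / (-(-(γ*δ + γ) + 1))
          else 1 / (-(γ + γ/δ) + 1)) := by
      refine Finset.prod_le_prod
        (fun _ _ ↦ setIntegral_nonneg measurableSet_Ioo fun x hx ↦
          Real.rpow_nonneg (hs.trans hx.1).le _) fun i _ ↦ ?_
      split_ifs
      · exact setIntegral_Ioo_rpow_le_of_neg_one_lt hs hs1.le (by linarith)
      · exact setIntegral_Ioo_rpow_le_of_lt_neg_one hs hs1.le (by linarith)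
      · exact setIntegral_Ioo_rpow_le_of_neg_one_lt hs hs1.le (by linarith)
    _ = _ := by
      have e0 : 1 / (-(γ/δ) + 1) = δ / (δ - γ) := by field_simp; ring
      have e1 : 1 / (-(γ + γ/δ) + 1) = δ / (δ - γ*(δ+1)) := by field_simp; ring
      have e2 : -(γ*δ + γ) + 1 = 1 - γ*(δ+1) := by ring
      rw [Fin.prod_univ_ite_zero_ite_last hk, e0, e1, e2]
      ring

/-- for δ > 1, γ > 0 with γ(δ+1) > 1 and γ + γ/δ < 1, s ∈ (0,1), k ≥ 1,
the nested integral ∫_s^1 du₀ ∫_s^{u₀} du₁ ⋯ ∫_s^{u_{k-1}} du_k of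
u₀^{-γ/δ} (∏_{j=1}^{k-1} u_j^{-γ-γ/δ}) u_k^{-γδ-γ} is at most
(1/(γ(δ+1)-1)) (δ/(δ-γ(δ+1)))^{k-1} (δ/(δ-γ)) s^{1-γ(δ+1)}. -/
theorem decreasing_skeleton_integral_bound (δ γ s : ℝ) (hδ : 1 < δ) (hγ0 : 0 < γ)
    (h1 : 1 < γ * (δ + 1)) (h2 : γ + γ/δ < 1) (hs : 0 < s) (hs1 : s < 1)
    (k : ℕ) (hk : 1 ≤ k) :
    (∫ u : Fin (k+1) → ℝ in
        {u : Fin (k+1) → ℝ |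
          (∀ i, s < u i) ∧ u 0 < 1 ∧ ∀ i : Fin k, u i.succ < u i.castSucc},
      ∏ i : Fin (k+1),
        (u i) ^ (if i.val = 0 then -(γ/δ)
                 else if i.val = k then -(γ*δ + γ) else -(γ + γ/δ)))
      ≤ (1 / (γ*(δ+1) - 1)) * (δ / (δ - γ*(δ+1))) ^ (k-1) * (δ / (δ - γ)) *
          s ^ (1 - γ*(δ+1)) :=
  decreasing_skeleton_integral_bound_general δ γ s hδ h1 h2 hs hs1 k hk
end
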